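/- arXiv:2307.03628 — 2 statements merged into one kernel-verified Lean document; each statement's English description precedes it below -/
import Mathlib

section
/- Let s > 0 and let r₁ ≤ r₂ ≤ r₃ be real numbers with rᵢ < s/2 for i = 1,2,3 and r₁ + r₂ + r₃ < s − 1/2. Then there exist real numbers q₁, q₂, q₃ and τ₁, τ₂, τ₃ such that: qᵢ ≥ 2 for i = 1,2,3; rᵢ + 1/2 ≤ τᵢ/2 + 1/qᵢ for i = 1,2,3; rᵢ ≤ τᵢ/2 ≤ s/2 for i = 1,2,3; 1/q₁ + 1/q₂ + 1/q₃ = 1; and max(τ₁,0) + max(τ₂,0) + max(τ₃,0) < 2s. -/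
/-!
Put `dᵢ = s/2 - rᵢ > 0` and `D = d₁ + d₂ + d₃`; the hypothesis on `∑ rᵢ` says `D > 1/2`.
The weights `wᵢ = dᵢ / D` sum to `1` and satisfy `0 < wᵢ < 2 dᵢ`. Taking `τᵢ = 2 rᵢ + wᵢ` and
`1/qᵢ = (1 - wᵢ)/2` makes the Sobolev condition `rᵢ + 1/2 ≤ τᵢ/2 + 1/qᵢ` an equality, gives
`∑ 1/qᵢ = (3 - 1)/2 = 1`, and `∑ τᵢ = 2 ∑ rᵢ + 1 < 2s` with each `τᵢ < s`.
-/

lemma exists_weights_lt_of_lt_sum {ι : Type*} [Fintype ι] {d : ι → ℝ} {c : ℝ}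
    (hd : ∀ i, 0 < d i) (hc : 0 < c) (hcd : c < ∑ i, d i) :
    ∃ w : ι → ℝ, (∀ i, 0 < w i ∧ c * w i < d i) ∧ ∑ i, w i = 1 := by
  have hD : 0 < ∑ i, d i := hc.trans hcd
  refine ⟨fun i => d i / ∑ j, d j, fun i => ⟨div_pos (hd i) hD, ?_⟩, ?_⟩
  · rw [mul_div_assoc', div_lt_iff₀ hD, mul_comm (d i)]
    exact mul_lt_mul_of_pos_right hcd (hd i)
  · rw [← Finset.sum_div, div_self hD.ne']

lemma max_zero_add_max_zero_add_max_zero_lt {a b c t : ℝ} (ht : 0 < t)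
    (ha : 2 * a < t) (hb : 2 * b < t) (hc : 2 * c < t) (habc : a + b + c < t) :
    max a 0 + max b 0 + max c 0 < t := by
  simp only [max_def]
  split_ifs <;> linarith

lemma two_le_two_div_one_sub {w : ℝ} (hw₀ : 0 ≤ w) (hw₁ : w < 1) : 2 ≤ 2 / (1 - w) := by
  rw [le_div_iff₀ (sub_pos.mpr hw₁)]
  linarith

theorem exponent_selection_general
    (s r₁ r₂ r₃ : ℝ) (hs : 0 < s)
    (hr₁ : r₁ < s / 2) (hr₂ : r₂ < s / 2) (hr₃ : r₃ < s / 2)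
    (hsum : r₁ + r₂ + r₃ < s - 1 / 2) :
    ∃ q₁ q₂ q₃ τ₁ τ₂ τ₃ : ℝ,
      2 ≤ q₁ ∧ 2 ≤ q₂ ∧ 2 ≤ q₃ ∧
      r₁ + 1 / 2 ≤ τ₁ / 2 + 1 / q₁ ∧
      r₂ + 1 / 2 ≤ τ₂ / 2 + 1 / q₂ ∧
      r₃ + 1 / 2 ≤ τ₃ / 2 + 1 / q₃ ∧
      r₁ ≤ τ₁ / 2 ∧ τ₁ / 2 ≤ s / 2 ∧
      r₂ ≤ τ₂ / 2 ∧ τ₂ / 2 ≤ s / 2 ∧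
      r₃ ≤ τ₃ / 2 ∧ τ₃ / 2 ≤ s / 2 ∧
      1 / q₁ + 1 / q₂ + 1 / q₃ = 1 ∧
      max τ₁ 0 + max τ₂ 0 + max τ₃ 0 < 2 * s := by
  obtain ⟨w, hw, hw_sum⟩ := exists_weights_lt_of_lt_sum (d := ![s / 2 - r₁, s / 2 - r₂, s / 2 - r₃])
    (by intro i; fin_cases i <;> simp <;> linarith) one_half_pos
    (by simp [Fin.sum_univ_three]; linarith)
  obtain ⟨hw₁, hd₁⟩ := hw 0
  obtain ⟨hw₂, hd₂⟩ := hw 1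
  obtain ⟨hw₃, hd₃⟩ := hw 2
  simp only [Fin.sum_univ_three] at hw_sum
  simp only [Matrix.cons_val_zero, Matrix.cons_val_one, Matrix.cons_val] at hd₁ hd₂ hd₃
  refine ⟨2 / (1 - w 0), 2 / (1 - w 1), 2 / (1 - w 2), 2 * r₁ + w 0, 2 * r₂ + w 1, 2 * r₃ + w 2,
    two_le_two_div_one_sub hw₁.le (by linarith), two_le_two_div_one_sub hw₂.le (by linarith),
    two_le_two_div_one_sub hw₃.le (by linarith), ?_⟩
  simp only [one_div_div]
  refine ⟨by linarith, by linarith, by linarith, by linarith, by linarith, by linarith, by linarith,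
    by linarith, by linarith, by linarith,
    max_zero_add_max_zero_add_max_zero_lt (by linarith) (by linarith) (by linarith) (by linarith)
      (by linarith)⟩

/-- Exponent selection for the upper bound on the nonlinear functional (Lemma 2.1). -/
theorem exponent_selection
    (s r₁ r₂ r₃ : ℝ) (hs : 0 < s)
    (h12 : r₁ ≤ r₂) (h23 : r₂ ≤ r₃)
    (hr₁ : r₁ < s / 2) (hr₂ : r₂ < s / 2) (hr₃ : r₃ < s / 2)
    (hsum : r₁ + r₂ + r₃ < s - 1 / 2) :
    ∃ q₁ q₂ q₃ τ₁ τ₂ τ₃ : ℝ,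
      2 ≤ q₁ ∧ 2 ≤ q₂ ∧ 2 ≤ q₃ ∧
      r₁ + 1 / 2 ≤ τ₁ / 2 + 1 / q₁ ∧
      r₂ + 1 / 2 ≤ τ₂ / 2 + 1 / q₂ ∧
      r₃ + 1 / 2 ≤ τ₃ / 2 + 1 / q₃ ∧
      r₁ ≤ τ₁ / 2 ∧ τ₁ / 2 ≤ s / 2 ∧
      r₂ ≤ τ₂ / 2 ∧ τ₂ / 2 ≤ s / 2 ∧
      r₃ ≤ τ₃ / 2 ∧ τ₃ / 2 ≤ s / 2 ∧
      1 / q₁ + 1 / q₂ + 1 / q₃ = 1 ∧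
      max τ₁ 0 + max τ₂ 0 + max τ₃ 0 < 2 * s :=
  exponent_selection_general s r₁ r₂ r₃ hs hr₁ hr₂ hr₃ hsum
end

section
/- Let f, g, h be Schwartz functions on ℝ, let a, b, c ≥ 0 be real numbers and let δ > 0. Then there exists a constant C > 0 such that for all t ∈ (0, 1], ∫_{|η| > δ/(2t)} (F ∗ G)(η) · ⟨η⟩^{c} · |ĥ(η)| dη ≤ C t, where F(x) = ⟨x⟩^{a} |f̂(x)|, G(x) = ⟨x⟩^{b} |ĝ(x)|, (F ∗ G)(η) = ∫_ℝ F(η − y) G(y) dy, f̂, ĝ, ĥ denote Fourier transforms, and ⟨x⟩ = (1 + x²)^{1/2}. -/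
open MeasureTheory

/-- The Japanese bracket `⟨x⟩ = (1 + x²)^{1/2}`. -/
noncomputable def jb (x : ℝ) : ℝ := Real.sqrt (1 + x ^ 2)

/-!
Since `f̂` is a Schwartz function, `⟨x⟩^a |f̂(x)|` is bounded by some `A`, so `(F ∗ G)(η) ≤ A ‖G‖₁`
for every `η`. On the region `|η| > δ/(2t)` we have `1 < (2t/δ) ⟨η⟩`, so the tail integral is at
most `A ‖G‖₁ (2t/δ) ∫ ⟨η⟩^{c+1} |ĥ(η)| dη`, and this last integral is finite because `ĥ` is a
Schwartz function.
-/

open FourierTransform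
open scoped SchwartzMap

lemma one_le_jb (x : ℝ) : 1 ≤ jb x :=
  Real.one_le_sqrt.mpr (le_add_of_nonneg_right (sq_nonneg x))

lemma jb_pos (x : ℝ) : 0 < jb x := one_pos.trans_le (one_le_jb x)

lemma abs_le_jb (x : ℝ) : |x| ≤ jb x :=
  Real.abs_le_sqrt (le_add_of_nonneg_left zero_le_one)

lemma jb_le_one_add_abs (x : ℝ) : jb x ≤ 1 + |x| := by
  simpa [jb] using sqrt_one_add_norm_sq_le x

lemma jb_rpow_two (x : ℝ) : jb x ^ (2 : ℝ) = 1 + x ^ 2 := by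
  rw [Real.rpow_two, jb, Real.sq_sqrt (by positivity)]

lemma continuous_jb : Continuous jb := by
  unfold jb; fun_prop

lemma jb_rpow_mul_norm_nonneg {E : Type*} [SeminormedAddGroup E] (r : ℝ) (ψ : ℝ → E) (x : ℝ) :
    0 ≤ jb x ^ r * ‖ψ x‖ :=
  mul_nonneg (Real.rpow_nonneg (jb_pos x).le r) (norm_nonneg _)

lemma jb_rpow_le_one_add_abs_pow (r x : ℝ) : jb x ^ r ≤ (1 + |x|) ^ ⌈r⌉₊ :=
  calc jb x ^ r ≤ jb x ^ (⌈r⌉₊ : ℝ) :=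
        Real.rpow_le_rpow_of_exponent_le (one_le_jb x) (Nat.le_ceil r)
    _ = jb x ^ ⌈r⌉₊ := Real.rpow_natCast _ _
    _ ≤ (1 + |x|) ^ ⌈r⌉₊ := pow_le_pow_left₀ (jb_pos x).le (jb_le_one_add_abs x) _

namespace SchwartzMap

variable {F : Type*} [NormedAddCommGroup F] [NormedSpace ℝ F]

lemma exists_jb_rpow_mul_norm_le (ψ : 𝓢(ℝ, F)) (r : ℝ) :
    ∃ C, ∀ x, jb x ^ r * ‖ψ x‖ ≤ C := by
  refine ⟨2 ^ ⌈r⌉₊ * (Finset.Iic (⌈r⌉₊, 0)).sup (fun m => SchwartzMap.seminorm ℝ m.1 m.2) ψ,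
    fun x => ?_⟩
  have h := one_add_le_sup_seminorm_apply (𝕜 := ℝ) (m := (⌈r⌉₊, 0)) le_rfl le_rfl ψ x
  rw [norm_iteratedFDeriv_zero, Real.norm_eq_abs] at h
  exact (mul_le_mul_of_nonneg_right (jb_rpow_le_one_add_abs_pow r x) (norm_nonneg _)).trans h

lemma integrable_jb_rpow_mul_norm (ψ : 𝓢(ℝ, F)) (r : ℝ) :
    Integrable (fun x => jb x ^ r * ‖ψ x‖) := by
  -- the bound at exponent `r + 2` is a bound `C ⟨x⟩⁻²` at exponent `r`
  obtain ⟨C, hC⟩ := ψ.exists_jb_rpow_mul_norm_le (r + 2)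
  refine (integrable_inv_one_add_sq.const_mul C).mono'
    ((continuous_jb.rpow_const fun x => Or.inl (jb_pos x).ne').mul
      ψ.continuous.norm).aestronglyMeasurable (.of_forall fun x => ?_)
  have hx : 0 < 1 + x ^ 2 := by positivity
  rw [Real.norm_of_nonneg (jb_rpow_mul_norm_nonneg r ψ x), ← div_eq_mul_inv, le_div_iff₀ hx,
    ← jb_rpow_two, mul_right_comm, ← Real.rpow_add (jb_pos x)]
  exact hC x

end SchwartzMap

lemma SchwartzMap.fourier_ofReal_apply (f : 𝓢(ℝ, ℝ)) (ξ : ℝ) :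
    𝓕 (fun x => (f x : ℂ)) ξ = 𝓕 (f.postcompCLM Complex.ofRealCLM) ξ := rfl

lemma integral_mul_le_of_le {α : Type*} [MeasurableSpace α] {μ : Measure α} {φ v : α → ℝ}
    {A : ℝ} (hφ0 : ∀ x, 0 ≤ φ x) (hφA : ∀ x, φ x ≤ A) (hv0 : ∀ x, 0 ≤ v x)
    (hv : Integrable v μ) : ∫ x, φ x * v x ∂μ ≤ A * ∫ x, v x ∂μ := by
  rw [← integral_const_mul]
  exact integral_mono_of_nonneg (.of_forall fun x => mul_nonneg (hφ0 x) (hv0 x))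
    (hv.const_mul A) (.of_forall fun x => mul_le_mul_of_nonneg_right (hφA x) (hv0 x))

lemma setIntegral_lt_abs_le {w : ℝ → ℝ} (hw0 : ∀ η, 0 ≤ w η)
    (hw : Integrable (fun η => jb η * w η)) {R : ℝ} (hR : 0 < R) :
    ∫ η in {η | R < |η|}, w η ≤ R⁻¹ * ∫ η, jb η * w η := by
  have hS : MeasurableSet {η : ℝ | R < |η|} := measurableSet_lt measurable_const measurable_abs
  have hRw : Integrable (fun η => R⁻¹ * (jb η * w η)) := hw.const_mul _
  calc ∫ η in {η | R < |η|}, w η ≤ ∫ η in {η | R < |η|}, R⁻¹ * (jb η * w η) := by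
        refine integral_mono_of_nonneg (.of_forall hw0) hRw.restrict ?_
        filter_upwards [ae_restrict_mem hS] with η hη
        rw [← div_eq_inv_mul, le_div_iff₀ hR, mul_comm]
        exact mul_le_mul_of_nonneg_right (hη.le.trans (abs_le_jb η)) (hw0 η)
    _ ≤ ∫ η, R⁻¹ * (jb η * w η) :=
        setIntegral_le_integral hRw (.of_forall fun η =>
          mul_nonneg (inv_nonneg.mpr hR.le) (mul_nonneg (jb_pos η).le (hw0 η)))
    _ = R⁻¹ * ∫ η, jb η * w η := integral_const_mul _ _

theorem high_frequency_tail_bound_general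
    (f g h : SchwartzMap ℝ ℝ) (a b c : ℝ)
    (δ : ℝ) (hδ : 0 < δ) :
    ∃ C > (0 : ℝ), ∀ t ∈ Set.Ioc (0 : ℝ) 1,
      (∫ η in {η : ℝ | δ / (2 * t) < |η|},
        (∫ y : ℝ,
          (jb (η - y) ^ a * ‖FourierTransform.fourier (fun x => (f x : ℂ)) (η - y)‖) *
            (jb y ^ b * ‖FourierTransform.fourier (fun x => (g x : ℂ)) y‖)) *
          (jb η ^ c * ‖FourierTransform.fourier (fun x => (h x : ℂ)) η‖))
        ≤ C * t := by
  set F := fun x => jb x ^ a * ‖𝓕 (fun x => (f x : ℂ)) x‖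
  set G := fun x => jb x ^ b * ‖𝓕 (fun x => (g x : ℂ)) x‖
  set H := fun x => jb x ^ c * ‖𝓕 (fun x => (h x : ℂ)) x‖
  obtain ⟨A, hA⟩ := (𝓕 (f.postcompCLM Complex.ofRealCLM)).exists_jb_rpow_mul_norm_le a
  have hA0 : 0 ≤ A := (jb_rpow_mul_norm_nonneg _ _ 0).trans (hA 0)
  have hG : Integrable G := (𝓕 (g.postcompCLM Complex.ofRealCLM)).integrable_jb_rpow_mul_norm b
  have hH : Integrable H := (𝓕 (h.postcompCLM Complex.ofRealCLM)).integrable_jb_rpow_mul_norm c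
  have hjbH : Integrable fun η => jb η * H η :=
    ((𝓕 (h.postcompCLM Complex.ofRealCLM)).integrable_jb_rpow_mul_norm (c + 1)).congr
      (.of_forall fun η => by
        simp only [H, SchwartzMap.fourier_ofReal_apply, Real.rpow_add_one (jb_pos η).ne']; ring)
  have hconv : ∀ η, ∫ y, F (η - y) * G y ≤ A * ∫ y, G y := fun η =>
    integral_mul_le_of_le (fun y => jb_rpow_mul_norm_nonneg _ _ _) (fun y => hA _)
      (jb_rpow_mul_norm_nonneg _ _) hG
  set K := A * (∫ y, G y) * (2 / δ) * ∫ η, jb η * H η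
  refine ⟨max 1 K, one_pos.trans_le (le_max_left _ _), fun t ⟨ht0, _⟩ => ?_⟩
  calc _ ≤ (A * ∫ y, G y) * ∫ η in {η : ℝ | δ / (2 * t) < |η|}, H η :=
        integral_mul_le_of_le (φ := fun η => ∫ y, F (η - y) * G y)
          (fun η => integral_nonneg fun y =>
            mul_nonneg (jb_rpow_mul_norm_nonneg _ _ _) (jb_rpow_mul_norm_nonneg _ _ _))
          hconv (jb_rpow_mul_norm_nonneg _ _) hH.restrict
    _ ≤ (A * ∫ y, G y) * ((δ / (2 * t))⁻¹ * ∫ η, jb η * H η) :=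
        mul_le_mul_of_nonneg_left
          (setIntegral_lt_abs_le (jb_rpow_mul_norm_nonneg _ _) hjbH (by positivity))
          (mul_nonneg hA0 (integral_nonneg (jb_rpow_mul_norm_nonneg _ _)))
    _ = K * t := by rw [inv_div]; ring
    _ ≤ max 1 K * t := mul_le_mul_of_nonneg_right (le_max_right _ _) ht0.le

/-- High-frequency tail bound (integral over domain C in the proof of Lemma 2.2). -/
theorem high_frequency_tail_bound
    (f g h : SchwartzMap ℝ ℝ) (a b c : ℝ) (ha : 0 ≤ a) (hb : 0 ≤ b) (hc : 0 ≤ c)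
    (δ : ℝ) (hδ : 0 < δ) :
    ∃ C > (0 : ℝ), ∀ t ∈ Set.Ioc (0 : ℝ) 1,
      (∫ η in {η : ℝ | δ / (2 * t) < |η|},
        (∫ y : ℝ,
          (jb (η - y) ^ a * ‖FourierTransform.fourier (fun x => (f x : ℂ)) (η - y)‖) *
            (jb y ^ b * ‖FourierTransform.fourier (fun x => (g x : ℂ)) y‖)) *
          (jb η ^ c * ‖FourierTransform.fourier (fun x => (h x : ℂ)) η‖))
        ≤ C * t :=
  high_frequency_tail_bound_general f g h a b c δ hδ
end
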